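/- Let L be an integral ℓ-monoid, let α be a fuzzy regular expression over a finite alphabet X with associated alphabet Y, let A = (A, X∪Y, δ^A, a₀, τ^A) be an arbitrary nondeterministic finite automaton recognizing ‖α_R‖, and let E be a right invariant crisp equivalence on A. Then the restriction E^r of E to the set A^r_α is a crisp equivalence on A^r_α satisfying E^r∘δ_x^{A^r_α} ≤ δ_x^{A^r_α}∘E^r for every x ∈ X, and the map Φ : A^r_α/E^r → (A/E)^r_α defined by Φ(E^r_a) = E_a is a well-defined bijection that satisfies δ_x^{A^r_α/E^r}(E^r_a, E^r_b) = δ_x^{(A/E)^r_α}(Φ(E^r_a), Φ(E^r_b)) for all x ∈ X and a, b ∈ A^r_α; hence the fuzzy automata (A/E)^r_α and (A^r_α)/E^r are isomorphic. -/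

import Mathlib

attribute [local instance] Classical.propDecidable

/-- A lattice-ordered monoid (ℓ-monoid): a lattice with least element `⊥` and greatest
element `⊤`, together with a monoid structure (multiplication `*`, unit `1`, playing the
role of `e`) such that `⊥` (playing the role of the scalar `0`) is absorbing and
multiplication distributes over binary joins on both sides. -/
class LMonoid (L : Type*) extends Lattice L, BoundedOrder L, Monoid L where
  mul_bot : ∀ x : L, x * ⊥ = ⊥
  bot_mul : ∀ x : L, ⊥ * x = ⊥
  mul_sup : ∀ x y z : L, x * (y ⊔ z) = x * y ⊔ x * z
  sup_mul : ∀ x y z : L, (x ⊔ y) * z = x * z ⊔ y * z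

/-- An integral ℓ-monoid: the unit of the multiplication is the top element of the lattice. -/
class IntegralLMonoid (L : Type*) extends LMonoid L where
  one_eq_top : (1 : L) = ⊤

/-- Fuzzy regular expressions over an alphabet `X` with scalars in `L`. -/
inductive FRE (X L : Type*) where
  | zero : FRE X L
  | eps : FRE X L
  | char : X → FRE X L
  | smul : L → FRE X L → FRE X L
  | plus : FRE X L → FRE X L → FRE X L
  | comp : FRE X L → FRE X L → FRE X L
  | star : FRE X L → FRE X L

/-- The set of scalars of `L` occurring in a fuzzy regular expression. -/
def FRE.scalars {X L : Type*} : FRE X L → Set L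
  | .zero => ∅
  | .eps => ∅
  | .char _ => ∅
  | .smul lam β => insert lam β.scalars
  | .plus β γ => β.scalars ∪ γ.scalars
  | .comp β γ => β.scalars ∪ γ.scalars
  | .star β => β.scalars

noncomputable section

namespace Fz

variable {L : Type*} [IntegralLMonoid L]

/-- Composition of fuzzy relations: `(R ∘ S)(a,b) = ⋁_{c} R(a,c) ⊗ S(c,b)`. -/
def fcomp {A : Type*} [Fintype A] (R S : A → A → L) : A → A → L :=
  fun a b => Finset.univ.sup fun c => R a c * S c b

/-- Composition of a fuzzy relation with a fuzzy set: `(R ∘ f)(a) = ⋁_{b} R(a,b) ⊗ f(b)`. -/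
def fcompf {A : Type*} [Fintype A] (R : A → A → L) (f : A → L) : A → L :=
  fun a => Finset.univ.sup fun b => R a b * f b

/-- Composition of a fuzzy set with a fuzzy relation: `(f ∘ R)(a) = ⋁_{b} f(b) ⊗ R(b,a)`. -/
def fcompfR {A : Type*} [Fintype A] (f : A → L) (R : A → A → L) : A → L :=
  fun a => Finset.univ.sup fun b => f b * R b a

/-- Powers of a fuzzy relation: `R⁰` is the crisp equality and `R^{k+1} = R^k ∘ R`. -/
def rpow {A : Type*} [Fintype A] (R : A → A → L) : ℕ → A → A → L
  | 0 => fun a b => if a = b then 1 else ⊥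
  | k + 1 => fcomp (rpow R k) R

private def dstarAux {A Z : Type*} [Fintype A] (δ : A → Z → A → L) : A → List Z → A → L
  | a, [], b => if a = b then 1 else ⊥
  | a, z :: w, b => Finset.univ.sup fun c => dstarAux δ a w c * δ c z b

/-- The extension of a fuzzy transition relation to words:
`δ(a, ε, b) = 1` if `a = b` and `⊥` otherwise, and
`δ(a, ux, b) = ⋁_{c} δ(a, u, c) ⊗ δ(c, x, b)`. -/
def dstar {A Z : Type*} [Fintype A] (δ : A → Z → A → L) (a : A) (w : List Z) (b : A) : L :=
  dstarAux δ a w.reverse b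

/-- Fuzzy language recognized by a fuzzy automaton with a single crisp initial state `a0`:
`L(A)(u) = ⋁_{b} δ(a0, u, b) ⊗ τ(b)`. -/
def lang {A Z : Type*} [Fintype A] (δ : A → Z → A → L) (a0 : A) (τ : A → L)
    (w : List Z) : L :=
  Finset.univ.sup fun b => dstar δ a0 w b * τ b

/-- Concatenation of fuzzy languages: `(fg)(u) = ⋁_{u = vw} f(v) ⊗ g(w)`
(a finite join over the factorizations of `u`). -/
def fconcat {X : Type*} (f g : List X → L) : List X → L :=
  fun u => (Finset.range (u.length + 1)).sup fun i => f (u.take i) * g (u.drop i)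

/-- Powers of a fuzzy language: `f⁰` is the characteristic function of the empty word,
and `f^{n+1} = fⁿ f`. -/
def fpow {X : Type*} (f : List X → L) : ℕ → List X → L
  | 0 => fun u => if u = [] then 1 else ⊥
  | n + 1 => fconcat (fpow f n) f

/-- `IsNorm α f` asserts that `f` is the fuzzy language `‖α‖` represented by the fuzzy
regular expression `α` (for the star, `‖β*‖(u)` is the least upper bound of the powers,
which is required to exist). -/
inductive IsNorm {X : Type*} : FRE X L → (List X → L) → Prop
  | zero : IsNorm .zero fun _ => ⊥
  | eps : IsNorm .eps fun u => if u = [] then 1 else ⊥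
  | char (x : X) : IsNorm (.char x) fun u => if u = [x] then 1 else ⊥
  | smul (lam : L) {β : FRE X L} {f : List X → L} :
      IsNorm β f → IsNorm (.smul lam β) fun u => lam * f u
  | plus {β γ : FRE X L} {f g : List X → L} :
      IsNorm β f → IsNorm γ g → IsNorm (.plus β γ) fun u => f u ⊔ g u
  | comp {β γ : FRE X L} {f g : List X → L} :
      IsNorm β f → IsNorm γ g → IsNorm (.comp β γ) (fconcat f g)
  | star {β : FRE X L} {f g : List X → L} :
      IsNorm β f → (∀ u, IsLUB {l | ∃ n : ℕ, l = fpow f n u} (g u)) →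
      IsNorm (.star β) g

/-- The ordinary regular expression `α_R` over `X ∪ Y` obtained from a fuzzy regular
expression `α` by replacing each scalar `λ` by the associated letter `λ' = sc λ ∈ Y`. -/
def toReg {X Y : Type*} (sc : L → Y) : FRE X L → RegularExpression (X ⊕ Y)
  | .zero => 0
  | .eps => 1
  | .char x => RegularExpression.char (Sum.inl x)
  | .smul lam β => RegularExpression.char (Sum.inr (sc lam)) * toReg sc β
  | .plus β γ => toReg sc β + toReg sc γ
  | .comp β γ => toReg sc β * toReg sc γ
  | .star β => (toReg sc β).star

/-- `U_Y(u)`: the set of words over `X ∪ Y` from which deleting all letters of `Y`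
yields `u` (the shuffle of `u` with `Y*`). -/
def UY {X : Type*} (Y : Type*) (u : List X) : Set (List (X ⊕ Y)) :=
  {v | v.filterMap (fun z => z.getLeft?) = u}

/-- The homomorphism `φ*_α : (X ∪ Y)* → (L, ⊗, 1)` determined by mapping every letter of
`X` to `1` and every letter `λ' ∈ Y` to the corresponding scalar `λ = φY λ'`. -/
def phiStar {X Y : Type*} (φY : Y → L) (v : List (X ⊕ Y)) : L :=
  (v.map (Sum.elim (fun _ => (1 : L)) φY)).prod

/-- The language `‖α_R‖` of the regular expression `α_R`, viewed as a fuzzy language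
with membership values in `{0, 1} ⊆ L`. -/
def langR {X Y : Type*} (sc : L → Y) (α : FRE X L) (v : List (X ⊕ Y)) : L :=
  if v ∈ (toReg sc α).matches' then 1 else ⊥

/-- The reflexive fuzzy relation `R` on the state set of a nondeterministic automaton over
`X ∪ Y`: `R(a,a) = 1` and, for `a ≠ b`, `R(a,b) = ⋁_{λ' ∈ Y} λ ⊗ δ(a, λ', b)`. -/
def Rstep {X Y A : Type*} [Fintype A] [Fintype Y] (φY : Y → L)
    (δ : A → X ⊕ Y → A → L) : A → A → L :=
  fun a b => if a = b then 1 else Finset.univ.sup fun y : Y => φY y * δ a (Sum.inr y) b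

/-- The fuzzy relation `R_A = Rⁿ`, `n = |A|`: the least transitive fuzzy relation
containing `R`. -/
def RA {X Y A : Type*} [Fintype A] [Fintype Y] (φY : Y → L)
    (δ : A → X ⊕ Y → A → L) : A → A → L :=
  rpow (Rstep φY δ) (Fintype.card A)

/-- The set `{φ*_α(v) ⊗ δ^A(a,v,b) : v ∈ U_Y(x)}` whose least upper bound defines the
transition `δ^{A_α}(a, x, b)` of the fuzzy automaton associated with `A` and `α`. -/
def dset {X Y A : Type*} [Fintype A] (φY : Y → L) (δ : A → X ⊕ Y → A → L)
    (a : A) (x : X) (b : A) : Set L :=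
  {l | ∃ v ∈ UY Y [x], l = phiStar φY v * dstar δ a v b}

/-- The set `{⋁_{b} φ*_α(v) ⊗ δ^A(a,v,b) ⊗ τ(b) : v ∈ Y*}` whose least upper bound defines
the terminal degree `τ^{A_α}(a)` of the fuzzy automaton associated with `A` and `α`. -/
def tset {X Y A : Type*} [Fintype A] (φY : Y → L) (δ : A → X ⊕ Y → A → L)
    (τ : A → L) (a : A) : Set L :=
  {l | ∃ w : List Y, l = Finset.univ.sup fun b =>
    phiStar φY ((w.map Sum.inr : List (X ⊕ Y))) *
      dstar δ a (w.map Sum.inr) b * τ b}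


/-- The setoid on the state set induced by a crisp equivalence `E`
(`a ≈ b` iff `E(a,b) = 1`). -/
def toSetoid {A : Type*} (E : A → A → L) (hrefl : ∀ a, E a a = 1)
    (hsymm : ∀ a b, E a b = E b a) (htrans : ∀ a b c, E a b * E b c ≤ E a c) :
    Setoid A where
  r a b := E a b = 1
  iseqv := by
    refine ⟨fun a => hrefl a, fun {a b} h => by rw [hsymm]; exact h, fun {a b c} h1 h2 => ?_⟩
    refine le_antisymm ?_ ?_
    · rw [IntegralLMonoid.one_eq_top (L := L)]; exact le_top
    · calc (1 : L) = 1 * 1 := (one_mul 1).symm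
      _ = E a b * E b c := by rw [h1, h2]
      _ ≤ E a c := htrans a b c

theorem erow {A : Type*} {E : A → A → L} (hsymm : ∀ a b, E a b = E b a)
    (htrans : ∀ a b c, E a b * E b c ≤ E a c) {a a' : A} (h : E a a' = 1) (c : A) :
    E a c = E a' c := by
  apply le_antisymm
  · have h' : E a' a = 1 := by rw [hsymm]; exact h
    calc E a c = E a' a * E a c := by rw [h', one_mul]
    _ ≤ E a' c := htrans a' a c
  · calc E a' c = E a a' * E a' c := by rw [h, one_mul]
    _ ≤ E a c := htrans a a' c

theorem sandwich_congr {A : Type*} [Fintype A] {E : A → A → L}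
    (hsymm : ∀ a b, E a b = E b a) (htrans : ∀ a b c, E a b * E b c ≤ E a c)
    (M : A → A → L) {a a' b b' : A} (ha : E a a' = 1) (hb : E b b' = 1) :
    fcomp (fcomp E M) E a b = fcomp (fcomp E M) E a' b' := by
  simp only [fcomp]
  have h1 : ∀ c, (Finset.univ.sup fun d => E a d * M d c) =
      Finset.univ.sup fun d => E a' d * M d c :=
    fun c => Finset.sup_congr rfl fun d _ => by rw [erow hsymm htrans ha d]
  have h2 : ∀ c, E c b = E c b' := fun c => by
    rw [hsymm c b, erow hsymm htrans hb c, hsymm b' c]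
  exact Finset.sup_congr rfl fun c _ => by rw [h1 c, h2 c]

/-- The fuzzy transition relation of the factor automaton `A/E`:
`δ^{A/E}(E_a, z, E_b) = (E ∘ δ_z ∘ E)(a, b)`. -/
def deltaQ {A Z : Type*} [Fintype A] (E : A → A → L) (hrefl : ∀ a, E a a = 1)
    (hsymm : ∀ a b, E a b = E b a) (htrans : ∀ a b c, E a b * E b c ≤ E a c)
    (δ : A → Z → A → L) :
    Quotient (toSetoid E hrefl hsymm htrans) → Z →
      Quotient (toSetoid E hrefl hsymm htrans) → L :=
  fun p z q =>
    Quotient.lift₂ (fun a b => fcomp (fcomp E (fun c d => δ c z d)) E a b)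
      (fun _ _ _ _ ha hb => sandwich_congr hsymm htrans _ ha hb) p q

/-- The terminal fuzzy set of the factor automaton `A/E`: `τ^{A/E}(E_a) = (τ^A ∘ E)(a)`. -/
def tauQ {A : Type*} [Fintype A] (E : A → A → L) (hrefl : ∀ a, E a a = 1)
    (hsymm : ∀ a b, E a b = E b a) (htrans : ∀ a b c, E a b * E b c ≤ E a c)
    (τ : A → L) : Quotient (toSetoid E hrefl hsymm htrans) → L :=
  Quotient.lift (fun a => fcompfR τ E a)
    (fun a a' h => by
      simp only [fcompfR]
      exact Finset.sup_congr rfl fun b _ => by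
        rw [hsymm b a, erow hsymm htrans h b, hsymm a' b])

end Fz

end

namespace Fz

variable {L : Type*} [IntegralLMonoid L]

/-- The state set `B^r_α = {a₀} ∪ {a : δ(b,x,a) = 1 for some b, x ∈ X}` of the reduced
fuzzy automaton associated with a nondeterministic automaton over `X ∪ Y`. -/
def redStates {X Y A : Type*} (δ : A → X ⊕ Y → A → L) (a0 : A) : Set A :=
  {a | a = a0 ∨ ∃ (b : A) (x : X), δ b (Sum.inl x) a = 1}

/-- The fuzzy transition relation `δ^{B^r_α}_x = R_B ∘ δ^B_x` (restricted to the reduced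
state set) of the reduced fuzzy automaton. -/
noncomputable def redDelta {X Y A : Type*} [Fintype A] [Fintype Y] (φY : Y → L)
    (δ : A → X ⊕ Y → A → L) (a0 : A) :
    ↥(redStates δ a0) → X → ↥(redStates δ a0) → L :=
  fun p x q => fcomp (RA φY δ) (fun c d => δ c (Sum.inl x) d) p.1 q.1

/-- Restriction of a fuzzy relation to a subset of the underlying set. -/
def restrict {A : Type*} (S : Set A) (E : A → A → L) : ↥S → ↥S → L :=
  fun p q => E p.1 q.1

end Fz


/-!
Right invariance of `E` propagates from the letters to everything built from them: crisp
degrees commute with every element of `L`, so `E ∘ R ≤ R ∘ E` for the one-step relation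
`R = Rstep`, hence for its powers, for `R_A` and for `R_A ∘ δ_x`; and whenever `E ∘ M ≤ M ∘ E`,
the equivalence absorbs the left factor: `E ∘ M ∘ E = M ∘ E`. Thus `A/E` has transitions
`δ_z ∘ E` between classes, and by induction on the exponent `R_{A/E}` is `R_A ∘ E`. The
exponents differ (`|A/E|` against `|A|`), but the powers of a reflexive relation on `n` states
are constant from the `n`-th on: a walk repeating a state loses a closed sub-walk when the
repetition is cut out, and in an integral ℓ-monoid this cannot decrease its weight.
So `(A/E)^r_α` has transitions `R_A ∘ δ_x ∘ E`, and so does `A^r_α/E^r`, because the columns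
of `R_A ∘ δ_x` outside `A^r_α` vanish.
-/

theorem IntegralLMonoid.le_one {L : Type*} [IntegralLMonoid L] (a : L) : a ≤ 1 :=
  IntegralLMonoid.one_eq_top (L := L) ▸ le_top

namespace Fz

instance {L : Type*} [LMonoid L] : MulLeftMono L where
  elim a b c h := by
    change a * b ≤ a * c
    rw [← sup_eq_right.mpr h, LMonoid.mul_sup]
    exact le_sup_left

instance {L : Type*} [LMonoid L] : MulRightMono L where
  elim a b c h := by
    change b * a ≤ c * a
    rw [← sup_eq_right.mpr h, LMonoid.sup_mul]
    exact le_sup_left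

variable {L : Type*} [IntegralLMonoid L]

theorem mul_finset_sup {ι : Type*} (x : L) (s : Finset ι) (f : ι → L) :
    x * s.sup f = s.sup fun i => x * f i :=
  Finset.apply_sup_eq_sup_comp (x * ·) (LMonoid.mul_sup x) (LMonoid.mul_bot x)

theorem finset_sup_mul {ι : Type*} (x : L) (s : Finset ι) (f : ι → L) :
    s.sup f * x = s.sup fun i => f i * x :=
  Finset.apply_sup_eq_sup_comp (· * x) (fun a b => LMonoid.sup_mul a b x) (LMonoid.bot_mul x)

theorem crisp_mul_comm {u : L} (hu : u = 1 ∨ u = ⊥) (v : L) : u * v = v * u := by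
  rcases hu with rfl | rfl
  · rw [one_mul, mul_one]
  · rw [LMonoid.bot_mul, LMonoid.mul_bot]

section Relations

variable {A : Type*} [Fintype A]

theorem le_fcomp {R S : A → A → L} {a b : A} (c : A) : R a c * S c b ≤ fcomp R S a b :=
  Finset.le_sup (f := fun c => R a c * S c b) (Finset.mem_univ c)

theorem fcomp_mono {R R' S S' : A → A → L} (hR : R ≤ R') (hS : S ≤ S') :
    fcomp R S ≤ fcomp R' S' := fun a b =>
  Finset.sup_le fun c _ => (mul_le_mul' (hR a c) (hS c b)).trans (le_fcomp c)

theorem fcomp_assoc (R S T : A → A → L) : fcomp (fcomp R S) T = fcomp R (fcomp S T) := by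
  funext a b
  simp only [fcomp, finset_sup_mul, mul_finset_sup, mul_assoc]
  exact Finset.sup_comm _ _ _

theorem le_fcomp_left {E : A → A → L} (hrefl : ∀ a, E a a = 1) (M : A → A → L) :
    M ≤ fcomp E M := fun a b =>
  calc M a b = E a a * M a b := by rw [hrefl, one_mul]
    _ ≤ fcomp E M a b := le_fcomp a

theorem le_fcomp_right {E : A → A → L} (hrefl : ∀ a, E a a = 1) (M : A → A → L) :
    M ≤ fcomp M E := fun a b =>
  calc M a b = M a b * E b b := by rw [hrefl, mul_one]
    _ ≤ fcomp M E a b := le_fcomp b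

theorem fcomp_id_left (S : A → A → L) :
    fcomp (fun a b => if a = b then (1 : L) else ⊥) S = S := by
  refine le_antisymm (fun a b => Finset.sup_le fun c _ => ?_) (le_fcomp_left (by simp) S)
  beta_reduce
  split_ifs with h
  · rw [h, one_mul]
  · rw [LMonoid.bot_mul]; exact bot_le

theorem fcomp_id_right (S : A → A → L) :
    fcomp S (fun a b => if a = b then (1 : L) else ⊥) = S := by
  refine le_antisymm (fun a b => Finset.sup_le fun c _ => ?_) (le_fcomp_right (by simp) S)
  beta_reduce
  split_ifs with h
  · rw [h, mul_one]
  · rw [LMonoid.mul_bot]; exact bot_le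

theorem fcomp_self_eq {E : A → A → L} (hrefl : ∀ a, E a a = 1)
    (htrans : ∀ a b c, E a b * E b c ≤ E a c) : fcomp E E = E :=
  le_antisymm (fun a b => Finset.sup_le fun c _ => htrans a c b) (le_fcomp_left hrefl E)

theorem fcomp_fcomp_eq_of_le {E M : A → A → L} (hrefl : ∀ a, E a a = 1)
    (htrans : ∀ a b c, E a b * E b c ≤ E a c) (h : fcomp E M ≤ fcomp M E) :
    fcomp (fcomp E M) E = fcomp M E := by
  refine le_antisymm ?_ ?_
  · calc fcomp (fcomp E M) E ≤ fcomp (fcomp M E) E := fcomp_mono h le_rfl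
      _ = fcomp M E := by rw [fcomp_assoc, fcomp_self_eq hrefl htrans]
  · calc fcomp M E ≤ fcomp E (fcomp M E) := le_fcomp_left hrefl _
      _ = fcomp (fcomp E M) E := (fcomp_assoc _ _ _).symm

theorem fcomp_fcomp_le {E R S : A → A → L} (hR : fcomp E R ≤ fcomp R E)
    (hS : fcomp E S ≤ fcomp S E) : fcomp E (fcomp R S) ≤ fcomp (fcomp R S) E :=
  calc fcomp E (fcomp R S) = fcomp (fcomp E R) S := (fcomp_assoc _ _ _).symm
    _ ≤ fcomp (fcomp R E) S := fcomp_mono hR le_rfl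
    _ = fcomp R (fcomp E S) := fcomp_assoc _ _ _
    _ ≤ fcomp R (fcomp S E) := fcomp_mono le_rfl hS
    _ = fcomp (fcomp R S) E := (fcomp_assoc _ _ _).symm

theorem fcomp_rpow_le {E R : A → A → L} (h : fcomp E R ≤ fcomp R E) (k : ℕ) :
    fcomp E (rpow R k) ≤ fcomp (rpow R k) E := by
  induction k with
  | zero => exact (fcomp_id_right E).trans_le (fcomp_id_left E).ge
  | succ k ih => exact fcomp_fcomp_le ih h

theorem exists_of_fcomp_eq_one {R S : A → A → L}
    (hR : ∀ a b, R a b = 1 ∨ R a b = ⊥) (hS : ∀ a b, S a b = 1 ∨ S a b = ⊥) {a b : A}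
    (h : fcomp R S a b = 1) : ∃ c, R a c = 1 ∧ S c b = 1 := by
  by_contra hne
  push Not at hne
  have hbot : fcomp R S a b = ⊥ := Finset.sup_eq_bot_iff _ _ |>.mpr fun c _ => by
    rcases hR a c with hc | hc
    · rw [hc, one_mul, (hS c b).resolve_left (hne c hc)]
    · rw [hc, LMonoid.bot_mul]
  -- in the trivial ℓ-monoid `1 = ⊥` every element is `1`
  have hall (u : L) : u = 1 := le_antisymm (IntegralLMonoid.le_one u) (h ▸ hbot ▸ bot_le)
  exact hne a (hall _) (hall _)

end Relations

section Walks

variable {B : Type*}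

/-- `l` lists the intermediate states of a walk from `a` to `b`. -/
def walkWeight (R : B → B → L) : B → List B → B → L
  | a, [], b => R a b
  | a, c :: l, b => R a c * walkWeight R c l b

theorem walkWeight_append (R : B → B → L) (a : B) (l₁ : List B) (c : B) (l₂ : List B)
    (b : B) : walkWeight R a (l₁ ++ c :: l₂) b = walkWeight R a l₁ c * walkWeight R c l₂ b := by
  induction l₁ generalizing a with
  | nil => rfl
  | cons d l₁ ih => simp only [List.cons_append, walkWeight, ih, mul_assoc]

theorem exists_shorter_walk_of_not_nodup (R : B → B → L) {a : B} {l : List B}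
    (h : ¬ (a :: l).Nodup) (b : B) :
    ∃ l' : List B, l'.length < l.length ∧ walkWeight R a l b ≤ walkWeight R a l' b := by
  induction l generalizing a with
  | nil => exact absurd (List.nodup_singleton a) h
  | cons c l ih =>
    by_cases ha : a ∈ c :: l
    · obtain ⟨s, t, hst⟩ := List.append_of_mem ha
      refine ⟨t, by rw [hst, List.length_append, List.length_cons]; omega, ?_⟩
      rw [hst, walkWeight_append]
      exact mul_le_of_le_one_left' (IntegralLMonoid.le_one _)
    · obtain ⟨l', hlen, hle⟩ := ih (fun hc => h (List.nodup_cons.mpr ⟨ha, hc⟩))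
      exact ⟨c :: l', by simpa using hlen, mul_le_mul_right hle _⟩

variable [Fintype B]

theorem rpow_succ' (R : B → B → L) (k : ℕ) : rpow R (k + 1) = fcomp R (rpow R k) := by
  induction k with
  | zero => exact (fcomp_id_left R).trans (fcomp_id_right R).symm
  | succ k ih => exact (congrArg (fcomp · R) ih).trans (fcomp_assoc _ _ _)

theorem rpow_mono {R : B → B → L} (hR : ∀ c, R c c = 1) : Monotone (rpow R) :=
  monotone_nat_of_le_succ fun k => le_fcomp_right hR (rpow R k)

theorem walkWeight_le_rpow (R : B → B → L) (a : B) (l : List B) (b : B) :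
    walkWeight R a l b ≤ rpow R (l.length + 1) a b := by
  induction l generalizing a with
  | nil => exact (congrFun₂ (fcomp_id_left R) a b).ge
  | cons c l ih =>
    rw [List.length_cons, rpow_succ']
    exact (mul_le_mul_right (ih c) _).trans (le_fcomp c)

/-- The prefix weight `p` is what makes the induction on the length go through. -/
theorem mul_rpow_succ_le {R : B → B → L} {k : ℕ} {a b : B} {u : L} (p : L)
    (h : ∀ l : List B, l.length = k → p * walkWeight R a l b ≤ u) :
    p * rpow R (k + 1) a b ≤ u := by
  induction k generalizing a p with
  | zero =>
    have h₁ : rpow R (0 + 1) a b = R a b := congrFun₂ (fcomp_id_left R) a b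
    exact h₁ ▸ h [] rfl
  | succ k ih =>
    rw [rpow_succ', fcomp, mul_finset_sup]
    refine Finset.sup_le fun c _ => ?_
    rw [← mul_assoc]
    exact ih (p * R a c) fun l hl => by
      simpa only [walkWeight, mul_assoc] using h (c :: l) (by rw [List.length_cons, hl])

theorem rpow_succ_le_of_card_le {R : B → B → L} (hR : ∀ c, R c c = 1) {k : ℕ}
    (hk : Fintype.card B ≤ k) : rpow R (k + 1) ≤ rpow R k := fun a b => by
  have key := mul_rpow_succ_le (R := R) (k := k) (u := rpow R k a b) 1 fun l hl => by
    have hdup : ¬ (a :: l).Nodup := fun hnd => by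
      have := hnd.length_le_card
      rw [List.length_cons] at this
      omega
    obtain ⟨l', hlen, hle⟩ := exists_shorter_walk_of_not_nodup R hdup b
    rw [one_mul]
    exact hle.trans ((walkWeight_le_rpow R a l' b).trans (rpow_mono hR (by omega) a b))
  rwa [one_mul] at key

theorem rpow_eq_of_card_le {R : B → B → L} (hR : ∀ c, R c c = 1) {m n : ℕ}
    (hm : Fintype.card B ≤ m) (hmn : m ≤ n) : rpow R n = rpow R m := by
  induction n, hmn using Nat.le_induction with
  | base => rfl
  | succ n hmn ih =>
    rw [← ih]
    exact le_antisymm (rpow_succ_le_of_card_le hR (hm.trans hmn)) (rpow_mono hR n.le_succ)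

end Walks

section Quotient

variable {A : Type*} [Fintype A]

theorem sup_quotient_mk {s : Setoid A} (g : Quotient s → L) :
    Finset.univ.sup g = Finset.univ.sup fun a => g (Quotient.mk s a) := by
  rw [← Finset.image_univ_of_surjective Quotient.mk_surjective, Finset.sup_image]
  rfl

theorem fcomp_mk {s : Setoid A} {P Q : Quotient s → Quotient s → L} {P' Q' : A → A → L}
    (hP : ∀ a b, P (Quotient.mk s a) (Quotient.mk s b) = P' a b)
    (hQ : ∀ a b, Q (Quotient.mk s a) (Quotient.mk s b) = Q' a b) (a b : A) :
    fcomp P Q (Quotient.mk s a) (Quotient.mk s b) = fcomp P' Q' a b := by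
  rw [fcomp, sup_quotient_mk]
  simp only [hP, hQ]
  rfl

variable {E : A → A → L} {hrefl : ∀ a, E a a = 1} {hsymm : ∀ a b, E a b = E b a}
  {htrans : ∀ a b c, E a b * E b c ≤ E a c}

theorem deltaQ_mk {Z : Type*} {δ : A → Z → A → L} {z : Z}
    (h : fcomp E (fun p q => δ p z q) ≤ fcomp (fun p q => δ p z q) E) (a b : A) :
    deltaQ E hrefl hsymm htrans δ (Quotient.mk _ a) z (Quotient.mk _ b) =
      fcomp (fun p q => δ p z q) E a b :=
  congrFun₂ (fcomp_fcomp_eq_of_le hrefl htrans h) a b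

theorem rpow_mk (hcrisp : ∀ a b, E a b = 1 ∨ E a b = ⊥) {R : A → A → L}
    {RQ : Quotient (toSetoid E hrefl hsymm htrans) →
      Quotient (toSetoid E hrefl hsymm htrans) → L}
    (hRQ : ∀ a b, RQ (Quotient.mk _ a) (Quotient.mk _ b) = fcomp R E a b)
    (hER : fcomp E R ≤ fcomp R E) (k : ℕ) (a b : A) :
    rpow RQ k (Quotient.mk _ a) (Quotient.mk _ b) = fcomp (rpow R k) E a b := by
  induction k generalizing a b with
  | zero =>
    rw [rpow, rpow, fcomp_id_left]
    beta_reduce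
    split_ifs with h
    · exact (Quotient.exact h).symm
    · exact ((hcrisp a b).resolve_left fun h' => h (Quotient.sound h')).symm
  | succ k ih =>
    calc rpow RQ (k + 1) (Quotient.mk _ a) (Quotient.mk _ b)
        = fcomp (fcomp (rpow R k) E) (fcomp R E) a b := fcomp_mk ih hRQ a b
      _ = fcomp (rpow R k) (fcomp (fcomp E R) E) a b := by simp only [fcomp_assoc]
      _ = fcomp (rpow R (k + 1)) E a b := by
        rw [fcomp_fcomp_eq_of_le hrefl htrans hER, ← fcomp_assoc]
        rfl

end Quotient

section Rstep

variable {X Y A : Type*} [Fintype Y] [Fintype A] (φY : Y → L) (δ : A → X ⊕ Y → A → L)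

theorem Rstep_self (a : A) : Rstep φY δ a a = 1 := if_pos rfl

theorem mul_le_Rstep (y : Y) (a b : A) : φY y * δ a (Sum.inr y) b ≤ Rstep φY δ a b := by
  unfold Rstep
  split_ifs
  · exact IntegralLMonoid.le_one _
  · exact Finset.le_sup (f := fun y => φY y * δ a (Sum.inr y) b) (Finset.mem_univ y)

theorem mul_fcomp_le_fcomp_Rstep (E : A → A → L) (y : Y) (a b : A) :
    φY y * fcomp (fun p q => δ p (Sum.inr y) q) E a b ≤ fcomp (Rstep φY δ) E a b := by
  rw [fcomp, mul_finset_sup]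
  refine Finset.sup_le fun d _ => ?_
  rw [← mul_assoc]
  exact (mul_le_mul_left (mul_le_Rstep φY δ y a d) _).trans (le_fcomp d)

variable {φY δ} {E : A → A → L}

theorem fcomp_Rstep_le (hcrisp : ∀ a b, E a b = 1 ∨ E a b = ⊥)
    (hrinv : ∀ y : Y, fcomp E (fun p q => δ p (Sum.inr y) q) ≤
      fcomp (fun p q => δ p (Sum.inr y) q) E) :
    fcomp E (Rstep φY δ) ≤ fcomp (Rstep φY δ) E := fun a b => by
  refine Finset.sup_le fun c _ => ?_
  by_cases hcb : c = b
  · subst hcb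
    rw [Rstep_self, mul_one]
    exact le_fcomp_left (Rstep_self φY δ) E a c
  · rw [Rstep, if_neg hcb, mul_finset_sup]
    refine Finset.sup_le fun y _ => ?_
    -- the crisp degree `E a c` commutes with `φY y`
    rw [← mul_assoc, crisp_mul_comm (hcrisp a c), mul_assoc]
    exact (mul_le_mul_right ((le_fcomp c).trans (hrinv y a b)) _).trans
      (mul_fcomp_le_fcomp_Rstep φY δ E y a b)

variable {hrefl : ∀ a, E a a = 1} {hsymm : ∀ a b, E a b = E b a}
  {htrans : ∀ a b c, E a b * E b c ≤ E a c}

theorem Rstep_deltaQ_mk (hcrisp : ∀ a b, E a b = 1 ∨ E a b = ⊥)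
    (hrinv : ∀ y : Y, fcomp E (fun p q => δ p (Sum.inr y) q) ≤
      fcomp (fun p q => δ p (Sum.inr y) q) E) (a b : A) :
    Rstep φY (deltaQ E hrefl hsymm htrans δ) (Quotient.mk _ a) (Quotient.mk _ b) =
      fcomp (Rstep φY δ) E a b := by
  by_cases hab : Quotient.mk (toSetoid E hrefl hsymm htrans) a = Quotient.mk _ b
  · rw [Rstep, if_pos hab]
    refine le_antisymm ?_ (IntegralLMonoid.le_one _)
    calc (1 : L) = Rstep φY δ a a * E a b := by rw [Rstep_self, Quotient.exact hab, one_mul]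
      _ ≤ fcomp (Rstep φY δ) E a b := le_fcomp a
  · have hE : E a b = ⊥ := (hcrisp a b).resolve_left fun h => hab (Quotient.sound h)
    rw [Rstep, if_neg hab]
    refine le_antisymm (Finset.sup_le fun y _ => ?_) (Finset.sup_le fun d _ => ?_)
    · rw [deltaQ_mk (hrinv y)]
      exact mul_fcomp_le_fcomp_Rstep φY δ E y a b
    · by_cases had : a = d
      · rw [← had, hE, LMonoid.mul_bot]
        exact bot_le
      · rw [Rstep, if_neg had, finset_sup_mul]
        refine Finset.sup_le fun y _ => ?_
        calc φY y * δ a (Sum.inr y) d * E d b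
            ≤ φY y * deltaQ E hrefl hsymm htrans δ (Quotient.mk _ a) (Sum.inr y)
                (Quotient.mk _ b) := by
              rw [mul_assoc, deltaQ_mk (hrinv y)]
              exact mul_le_mul_right (le_fcomp (R := fun p q => δ p (Sum.inr y) q) d) _
          _ ≤ _ := Finset.le_sup (f := fun y => φY y * deltaQ E hrefl hsymm htrans δ
                (Quotient.mk _ a) (Sum.inr y) (Quotient.mk _ b)) (Finset.mem_univ y)

theorem fcomp_RA_le (hcrisp : ∀ a b, E a b = 1 ∨ E a b = ⊥)
    (hrinv : ∀ z : X ⊕ Y, fcomp E (fun p q => δ p z q) ≤ fcomp (fun p q => δ p z q) E) :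
    fcomp E (RA φY δ) ≤ fcomp (RA φY δ) E :=
  fcomp_rpow_le (fcomp_Rstep_le hcrisp fun y => hrinv (Sum.inr y)) _

theorem RA_deltaQ_mk (hcrisp : ∀ a b, E a b = 1 ∨ E a b = ⊥)
    (hrinv : ∀ z : X ⊕ Y, fcomp E (fun p q => δ p z q) ≤ fcomp (fun p q => δ p z q) E)
    (a b : A) :
    RA φY (deltaQ E hrefl hsymm htrans δ) (Quotient.mk _ a) (Quotient.mk _ b) =
      fcomp (RA φY δ) E a b := by
  have hcard : Fintype.card (Quotient (toSetoid E hrefl hsymm htrans)) ≤ Fintype.card A :=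
    Fintype.card_quotient_le _
  rw [RA, ← rpow_eq_of_card_le (Rstep_self φY (deltaQ E hrefl hsymm htrans δ)) le_rfl hcard]
  exact rpow_mk hcrisp (Rstep_deltaQ_mk hcrisp fun y => hrinv (Sum.inr y))
    (fcomp_Rstep_le hcrisp fun y => hrinv (Sum.inr y)) _ a b

end Rstep

section Restrict

variable {A : Type*} [Fintype A] (S : Set A)

theorem fcomp_restrict_le (R M : A → A → L) (p q : S) :
    fcomp (restrict S R) (restrict S M) p q ≤ fcomp R M p q :=
  Finset.sup_le fun c _ => le_fcomp (R := R) (S := M) (c : A)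

theorem fcomp_restrict_eq {R : A → A → L} (hR : ∀ a, ∀ c ∉ S, R a c = ⊥) (M : A → A → L)
    (p q : S) : fcomp (restrict S R) (restrict S M) p q = fcomp R M p q := by
  refine le_antisymm (fcomp_restrict_le S R M p q) (Finset.sup_le fun c _ => ?_)
  by_cases hc : c ∈ S
  · exact le_fcomp (R := restrict S R) (S := restrict S M) (⟨c, hc⟩ : S)
  · rw [hR _ c hc, LMonoid.bot_mul]
    exact bot_le

variable {S} {E M : A → A → L}

theorem fcomp_restrict_le_fcomp_restrict (hM : ∀ a, ∀ c ∉ S, M a c = ⊥)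
    (h : fcomp E M ≤ fcomp M E) :
    fcomp (restrict S E) (restrict S M) ≤ fcomp (restrict S M) (restrict S E) := fun p q =>
  (fcomp_restrict_le S E M p q).trans ((h p q).trans (fcomp_restrict_eq S hM E p q).ge)

theorem fcomp_fcomp_restrict_eq (hrefl : ∀ a, E a a = 1)
    (htrans : ∀ a b c, E a b * E b c ≤ E a c) (hM : ∀ a, ∀ c ∉ S, M a c = ⊥)
    (h : fcomp E M ≤ fcomp M E) (p q : S) :
    fcomp (fcomp (restrict S E) (restrict S M)) (restrict S E) p q = fcomp M E p q := by
  refine le_antisymm ?_ ?_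
  · calc fcomp (fcomp (restrict S E) (restrict S M)) (restrict S E) p q
        ≤ fcomp (restrict S (fcomp E M)) (restrict S E) p q :=
          fcomp_mono (fcomp_restrict_le S E M) le_rfl p q
      _ ≤ fcomp (fcomp E M) E p q := fcomp_restrict_le S _ _ p q
      _ = fcomp M E p q := congrFun₂ (fcomp_fcomp_eq_of_le hrefl htrans h) p q
  · calc fcomp M E p q = fcomp (restrict S M) (restrict S E) p q :=
          (fcomp_restrict_eq S hM E p q).symm
      _ ≤ fcomp (restrict S E) (fcomp (restrict S M) (restrict S E)) p q :=
          le_fcomp_left (E := restrict S E) (fun p => hrefl p) _ p q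
      _ = fcomp (fcomp (restrict S E) (restrict S M)) (restrict S E) p q := by
          rw [fcomp_assoc]

end Restrict

section Reduced

variable {X Y A : Type*} [Fintype A] {δ : A → X ⊕ Y → A → L} {a0 : A}

theorem fcomp_delta_eq_bot (hδ : ∀ a z b, δ a z b = 1 ∨ δ a z b = ⊥) (R : A → A → L)
    (x : X) (a : A) {c : A} (hc : c ∉ redStates δ a0) :
    fcomp R (fun p q => δ p (Sum.inl x) q) a c = ⊥ :=
  Finset.sup_eq_bot_iff _ _ |>.mpr fun d _ => by
    change R a d * δ d (Sum.inl x) c = ⊥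
    rw [(hδ d (Sum.inl x) c).resolve_left fun h => hc (Or.inr ⟨d, x, h⟩), LMonoid.mul_bot]

variable {E : A → A → L} {hrefl : ∀ a, E a a = 1} {hsymm : ∀ a b, E a b = E b a}
  {htrans : ∀ a b c, E a b * E b c ≤ E a c}

theorem mk_mem_redStates {p : A} (hp : p ∈ redStates δ a0) :
    Quotient.mk (toSetoid E hrefl hsymm htrans) p ∈
      redStates (deltaQ E hrefl hsymm htrans δ) (Quotient.mk _ a0) := by
  rcases hp with rfl | ⟨b, x, h⟩
  · exact Or.inl rfl
  · refine Or.inr ⟨Quotient.mk _ b, x, le_antisymm (IntegralLMonoid.le_one _) ?_⟩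
    calc (1 : L) = δ b (Sum.inl x) p := h.symm
      _ ≤ fcomp (fcomp E fun c d => δ c (Sum.inl x) d) E b p :=
        (le_fcomp_left hrefl (fun c d => δ c (Sum.inl x) d) b p).trans
          (le_fcomp_right hrefl _ b p)

variable (δ a0 hrefl hsymm htrans)

/-- The map `Φ : A^r_α/E^r → (A/E)^r_α`, `Φ(E^r_p) = E_p`. -/
def redQuotMap :
    Quotient (toSetoid (restrict (redStates δ a0) E) (fun p => hrefl p.1)
        (fun p q => hsymm p.1 q.1) (fun p q r => htrans p.1 q.1 r.1)) →
      redStates (deltaQ E hrefl hsymm htrans δ) (Quotient.mk _ a0) :=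
  Quotient.lift (fun p => ⟨Quotient.mk _ p.1, mk_mem_redStates p.2⟩)
    fun _ _ h => Subtype.ext (Quotient.sound h)

variable {δ a0 hrefl hsymm htrans}

theorem redQuotMap_bijective (hcrisp : ∀ a b, E a b = 1 ∨ E a b = ⊥)
    (hδ : ∀ a z b, δ a z b = 1 ∨ δ a z b = ⊥)
    (hrinv : ∀ x : X, fcomp E (fun p q => δ p (Sum.inl x) q) ≤
      fcomp (fun p q => δ p (Sum.inl x) q) E) :
    Function.Bijective (redQuotMap δ a0 hrefl hsymm htrans) := by
  constructor
  · intro P Q h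
    induction P using Quotient.ind with | _ p => ?_
    induction Q using Quotient.ind with | _ q => ?_
    have hpq : Quotient.mk (toSetoid E hrefl hsymm htrans) p.1 = Quotient.mk _ q.1 :=
      congrArg Subtype.val h
    exact Quotient.sound (Quotient.exact hpq : E p.1 q.1 = 1)
  rintro ⟨P, hP | ⟨B, x, h⟩⟩
  · exact ⟨Quotient.mk _ ⟨a0, Or.inl rfl⟩, Subtype.ext hP.symm⟩
  · induction P using Quotient.ind with | _ c => ?_
    induction B using Quotient.ind with | _ b => ?_
    rw [deltaQ_mk (hrinv x)] at h
    obtain ⟨d, hbd, hdc⟩ := exists_of_fcomp_eq_one (hδ · (Sum.inl x) ·) hcrisp h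
    exact ⟨Quotient.mk _ ⟨d, Or.inr ⟨b, x, hbd⟩⟩, Subtype.ext (Quotient.sound hdc)⟩

theorem redDelta_redQuotMap [Fintype Y] {φY : Y → L} (hcrisp : ∀ a b, E a b = 1 ∨ E a b = ⊥)
    (hrinv : ∀ z : X ⊕ Y, fcomp E (fun p q => δ p z q) ≤ fcomp (fun p q => δ p z q) E)
    (x : X) (p q : redStates δ a0) :
    redDelta φY (deltaQ E hrefl hsymm htrans δ) (Quotient.mk _ a0)
        (redQuotMap δ a0 hrefl hsymm htrans (Quotient.mk _ p)) x
        (redQuotMap δ a0 hrefl hsymm htrans (Quotient.mk _ q)) =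
      fcomp (fcomp (RA φY δ) fun c d => δ c (Sum.inl x) d) E p q :=
  calc _ = fcomp (fcomp (RA φY δ) E) (fcomp (fun c d => δ c (Sum.inl x) d) E) p q :=
        fcomp_mk (RA_deltaQ_mk hcrisp hrinv) (deltaQ_mk (hrinv (Sum.inl x))) p q
    _ = fcomp (RA φY δ) (fcomp (fcomp E fun c d => δ c (Sum.inl x) d) E) p q := by
        simp only [fcomp_assoc]
    _ = _ := by rw [fcomp_fcomp_eq_of_le hrefl htrans (hrinv _), fcomp_assoc]

end Reduced

end Fz

open Fz in
theorem stmt18_general {L X Y A : Type*} [IntegralLMonoid L] [Fintype Y] [Fintype A]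
    (φY : Y → L)
    (δ : A → X ⊕ Y → A → L) (a0 : A)
    (hδ : ∀ a z b, δ a z b = 1 ∨ δ a z b = ⊥)
    (E : A → A → L)
    (hcrisp : ∀ a b, E a b = 1 ∨ E a b = ⊥)
    (hrefl : ∀ a, E a a = 1) (hsymm : ∀ a b, E a b = E b a)
    (htrans : ∀ a b c, E a b * E b c ≤ E a c)
    (hrinv : ∀ (z : X ⊕ Y) (a b : A),
      fcomp E (fun p q => δ p z q) a b ≤ fcomp (fun p q => δ p z q) E a b) :
    -- `E^r` is a crisp equivalence on `A^r_α`
    (∀ p q : ↥(redStates δ a0), restrict (redStates δ a0) E p q = 1 ∨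
      restrict (redStates δ a0) E p q = ⊥) ∧
    (∀ p : ↥(redStates δ a0), restrict (redStates δ a0) E p p = 1) ∧
    (∀ p q : ↥(redStates δ a0),
      restrict (redStates δ a0) E p q = restrict (redStates δ a0) E q p) ∧
    (∀ p q r : ↥(redStates δ a0),
      restrict (redStates δ a0) E p q * restrict (redStates δ a0) E q r ≤
        restrict (redStates δ a0) E p r) ∧
    -- `E^r ∘ δ_x^{A^r_α} ≤ δ_x^{A^r_α} ∘ E^r`
    (∀ (x : X) (p q : ↥(redStates δ a0)),
      fcomp (restrict (redStates δ a0) E) (fun r s => redDelta φY δ a0 r x s) p q ≤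
        fcomp (fun r s => redDelta φY δ a0 r x s) (restrict (redStates δ a0) E) p q) ∧
    -- `Φ : A^r_α/E^r → (A/E)^r_α` is a well-defined bijection compatible with transitions
    (∃ Φ : Quotient (toSetoid (restrict (redStates δ a0) E)
          (fun p => hrefl p.1) (fun p q => hsymm p.1 q.1)
          (fun p q r => htrans p.1 q.1 r.1)) →
        ↥(redStates (deltaQ E hrefl hsymm htrans δ)
            (Quotient.mk (toSetoid E hrefl hsymm htrans) a0)),
      Function.Bijective Φ ∧
      (∀ p : ↥(redStates δ a0),
        (Φ (Quotient.mk _ p) : Quotient (toSetoid E hrefl hsymm htrans)) =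
          Quotient.mk (toSetoid E hrefl hsymm htrans) p.1) ∧
      (∀ (x : X) (p q : ↥(redStates δ a0)),
        fcomp (fcomp (restrict (redStates δ a0) E) (fun r s => redDelta φY δ a0 r x s))
            (restrict (redStates δ a0) E) p q =
          redDelta φY (deltaQ E hrefl hsymm htrans δ)
            (Quotient.mk (toSetoid E hrefl hsymm htrans) a0)
            (Φ (Quotient.mk _ p)) x (Φ (Quotient.mk _ q)))) := by
  have hM (x : X) : fcomp E (fcomp (RA φY δ) fun c d => δ c (Sum.inl x) d) ≤
      fcomp (fcomp (RA φY δ) fun c d => δ c (Sum.inl x) d) E :=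
    fcomp_fcomp_le (fcomp_RA_le hcrisp hrinv) (hrinv (Sum.inl x))
  have hcol (x : X) (a c : A) (hc : c ∉ redStates δ a0) :
      fcomp (RA φY δ) (fun c d => δ c (Sum.inl x) d) a c = ⊥ :=
    fcomp_delta_eq_bot hδ _ x a hc
  exact ⟨fun p q => hcrisp p q, fun p => hrefl p, fun p q => hsymm p q,
    fun p q r => htrans p q r, fun x => fcomp_restrict_le_fcomp_restrict (hcol x) (hM x),
    redQuotMap δ a0 hrefl hsymm htrans,
    redQuotMap_bijective hcrisp hδ fun x => hrinv (Sum.inl x), fun _ => rfl,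
    fun x p q => (fcomp_fcomp_restrict_eq hrefl htrans (hcol x) (hM x) p q).trans
      (redDelta_redQuotMap hcrisp hrinv x p q).symm⟩

open Fz in
/-- **Theorem 10 of the paper.** Let `L` be an integral ℓ-monoid, `α` a
fuzzy regular expression over a finite alphabet `X` with associated alphabet `Y`,
`A = (A, X∪Y, δ, a₀, τ)` an arbitrary nondeterministic finite automaton recognizing
`‖α_R‖`, and `E` a right invariant crisp equivalence on `A`.  Then the restriction `E^r`
of `E` to `A^r_α` is a crisp equivalence on `A^r_α` satisfying
`E^r ∘ δ_x^{A^r_α} ≤ δ_x^{A^r_α} ∘ E^r` for every `x ∈ X`, and the map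
`Φ : A^r_α/E^r → (A/E)^r_α`, `Φ(E^r_a) = E_a`, is a well-defined bijection with
`δ_x^{A^r_α/E^r}(E^r_a, E^r_b) = δ_x^{(A/E)^r_α}(Φ(E^r_a), Φ(E^r_b))` for all `x ∈ X` and
`a, b ∈ A^r_α`; hence the fuzzy automata `(A/E)^r_α` and `(A^r_α)/E^r` are isomorphic. -/
theorem stmt18 {L X Y A : Type*} [IntegralLMonoid L] [Fintype X] [Fintype Y] [Fintype A]
    (α : FRE X L) (sc : L → Y) (φY : Y → L)
    (hsc : Set.BijOn sc α.scalars (Set.univ : Set Y))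
    (hφY : ∀ l ∈ α.scalars, φY (sc l) = l)
    (δ : A → X ⊕ Y → A → L) (a0 : A) (τ : A → L)
    (hδ : ∀ a z b, δ a z b = 1 ∨ δ a z b = ⊥)
    (hτ : ∀ a, τ a = 1 ∨ τ a = ⊥)
    (hrec : ∀ v : List (X ⊕ Y), lang δ a0 τ v = langR sc α v)
    (E : A → A → L)
    (hcrisp : ∀ a b, E a b = 1 ∨ E a b = ⊥)
    (hrefl : ∀ a, E a a = 1) (hsymm : ∀ a b, E a b = E b a)
    (htrans : ∀ a b c, E a b * E b c ≤ E a c)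
    (hrinv : ∀ (z : X ⊕ Y) (a b : A),
      fcomp E (fun p q => δ p z q) a b ≤ fcomp (fun p q => δ p z q) E a b)
    (hτinv : ∀ a, fcompf E τ a = τ a) :
    -- `E^r` is a crisp equivalence on `A^r_α`
    (∀ p q : ↥(redStates δ a0), restrict (redStates δ a0) E p q = 1 ∨
      restrict (redStates δ a0) E p q = ⊥) ∧
    (∀ p : ↥(redStates δ a0), restrict (redStates δ a0) E p p = 1) ∧
    (∀ p q : ↥(redStates δ a0),
      restrict (redStates δ a0) E p q = restrict (redStates δ a0) E q p) ∧
    (∀ p q r : ↥(redStates δ a0),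
      restrict (redStates δ a0) E p q * restrict (redStates δ a0) E q r ≤
        restrict (redStates δ a0) E p r) ∧
    -- `E^r ∘ δ_x^{A^r_α} ≤ δ_x^{A^r_α} ∘ E^r`
    (∀ (x : X) (p q : ↥(redStates δ a0)),
      fcomp (restrict (redStates δ a0) E) (fun r s => redDelta φY δ a0 r x s) p q ≤
        fcomp (fun r s => redDelta φY δ a0 r x s) (restrict (redStates δ a0) E) p q) ∧
    -- `Φ : A^r_α/E^r → (A/E)^r_α` is a well-defined bijection compatible with transitions
    (∃ Φ : Quotient (toSetoid (restrict (redStates δ a0) E)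
          (fun p => hrefl p.1) (fun p q => hsymm p.1 q.1)
          (fun p q r => htrans p.1 q.1 r.1)) →
        ↥(redStates (deltaQ E hrefl hsymm htrans δ)
            (Quotient.mk (toSetoid E hrefl hsymm htrans) a0)),
      Function.Bijective Φ ∧
      (∀ p : ↥(redStates δ a0),
        (Φ (Quotient.mk _ p) : Quotient (toSetoid E hrefl hsymm htrans)) =
          Quotient.mk (toSetoid E hrefl hsymm htrans) p.1) ∧
      (∀ (x : X) (p q : ↥(redStates δ a0)),
        fcomp (fcomp (restrict (redStates δ a0) E) (fun r s => redDelta φY δ a0 r x s))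
            (restrict (redStates δ a0) E) p q =
          redDelta φY (deltaQ E hrefl hsymm htrans δ)
            (Quotient.mk (toSetoid E hrefl hsymm htrans) a0)
            (Φ (Quotient.mk _ p)) x (Φ (Quotient.mk _ q)))) :=
  stmt18_general φY δ a0 hδ E hcrisp hrefl hsymm htrans hrinv
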